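/- Let k ≥ 2 and a ≥ 1. For all n ∈ ℕ, the number of occurrences of the two-letter word (a.0) in W_n^{(k)} satisfies: c^{(k)}((a.0); n) = 0 if 0 ≤ n ≤ a; c^{(k)}((a.0); n) = 2^{n−a−1} if a < n < a+k−1; and c^{(k)}((a.0); n) = Σ_{j=1}^{k−1} c^{(k)}((a.0); n−j) if n ≥ a+k−1. -/

import Mathlib

/-- Image of a single letter `m = k*i + j` under the k-Bonacci morphism `φ_k` over ℕ:
`φ_k(ki+j) = (ki)(ki+j+1)` for `0 ≤ j ≤ k-2`, and `φ_k(ki+(k-1)) = ki+k`. -/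
def phiLetter (k m : ℕ) : List ℕ :=
  if m % k = k - 1 then [m + 1] else [k * (m / k), m + 1]

/-- The morphism `φ_k`, extended to words by concatenation. -/
def phi (k : ℕ) (w : List ℕ) : List ℕ := (w.map (phiLetter k)).flatten

/-- `W k n = φ_k^n(0)`, the n-th iterate of `φ_k` applied to the one-letter word `0`. -/
def W (k n : ℕ) : List ℕ := (phi k)^[n] [0]

/-- `shift n w = n ⊕ w`, adding `n` to every letter. -/
def shift (n : ℕ) (w : List ℕ) : List ℕ := w.map (· + n)

/-- `occ B w = |w|_B`, the number of (possibly overlapping) occurrences of `B`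
as a factor of `w`, i.e. the number of positions `i` at which `B` is a prefix
of the suffix of `w` starting at `i`. -/
def occ (B w : List ℕ) : ℕ :=
  ((List.range (w.length + 1)).filter (fun i => decide (B <+: w.drop i))).length

/-- `C k B = C_B^{(k)}(y) = Σ_{n≥0} |W_n^{(k)}|_B yⁿ` as a formal power series over ℚ. -/
noncomputable def C (k : ℕ) (B : List ℕ) : PowerSeries ℚ :=
  PowerSeries.mk (fun n => (occ B (W k n) : ℚ))

/-- `Hgf r = H_r(y)`, the multiplicative inverse of `1 - y - y² - ⋯ - y^r`. -/
noncomputable def Hgf (r : ℕ) : PowerSeries ℚ :=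
  (1 - ∑ j ∈ Finset.Icc 1 r, (PowerSeries.X : PowerSeries ℚ) ^ j)⁻¹

/-- `Ggf r = G_r(y) = (1 - y^r)·H_r(y) - 1`. -/
noncomputable def Ggf (r : ℕ) : PowerSeries ℚ :=
  (1 - (PowerSeries.X : PowerSeries ℚ) ^ r) * Hgf r - 1

/-- The set `B^{(k)} = B_1^{(k)} ∪ B_2^{(k)} ∪ B_3^{(k)}` of length-2 words. -/
def Bset (k : ℕ) : Set (List ℕ) :=
  {U | (∃ i a : ℕ, 1 ≤ a ∧ U = [a + k * i, k + k * i]) ∨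
       (∃ i b : ℕ, 1 ≤ b ∧ b ≤ k - 1 ∧ U = [k * i, b + k * i]) ∨
       (∃ a : ℕ, 1 ≤ a ∧ U = [a, 0])}

/-- The list of blocks in the decomposition of `W_n^{(k)}` for `n ≥ k`:
`W_{n-1}, …, W_{n-k+1}, k ⊕ W_{n-k}`. -/
def blocks (k n : ℕ) : List (List ℕ) :=
  (List.range (k - 1)).map (fun j => W k (n - 1 - j)) ++ [shift k (W k (n - k))]

/- ### basic occ lemmas -/

lemma occ_cons (B : List ℕ) (c : ℕ) (w : List ℕ) :
    occ B (c :: w) = occ B w + (if B <+: (c :: w) then 1 else 0) := by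
  unfold occ
  rw [← List.countP_eq_length_filter, ← List.countP_eq_length_filter,
    List.length_cons, List.range_succ_eq_map, List.countP_cons, List.countP_map]
  congr 1
  simp

lemma occ2_nil (x y : ℕ) : occ [x, y] [] = 0 := by
  simp [occ, List.filter]

lemma occ2_single (x y c : ℕ) : occ [x, y] [c] = 0 := by
  rw [occ_cons, occ2_nil]
  have : ¬ ([x, y] <+: [c]) := by
    intro h; have := h.length_le; simp at this
  simp [this]

lemma prefix2_iff (x y c d : ℕ) (w : List ℕ) :
    ([x, y] <+: (c :: d :: w)) ↔ (x = c ∧ y = d) := by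
  constructor
  · intro h
    rcases (List.cons_prefix_cons).1 h with ⟨h1, h2⟩
    rcases (List.cons_prefix_cons).1 h2 with ⟨h3, _⟩
    exact ⟨h1, h3⟩
  · rintro ⟨rfl, rfl⟩
    exact ⟨w, rfl⟩

lemma occ2_cons_cons (x y c d : ℕ) (w : List ℕ) :
    occ [x, y] (c :: d :: w) = occ [x, y] (d :: w) + (if x = c ∧ y = d then 1 else 0) := by
  rw [occ_cons]
  congr 1
  simp [prefix2_iff]

lemma occ2_append (x y : ℕ) (u v : List ℕ) (hv : v ≠ []) :
    occ [x, y] (u ++ v) =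
      occ [x, y] u + occ [x, y] v +
        (if u.getLast? = some x ∧ v.head? = some y then 1 else 0) := by
  induction u with
  | nil => simp [occ2_nil]
  | cons c u ih =>
    cases u with
    | nil =>
      cases v with
      | nil => exact absurd rfl hv
      | cons e v' =>
        simp only [List.nil_append, List.singleton_append]
        rw [occ2_cons_cons, occ2_single]
        simp only [List.getLast?_singleton, List.head?_cons, Option.some.injEq]
        have : (x = c ∧ y = e) ↔ (c = x ∧ e = y) := by constructor <;> (rintro ⟨rfl, rfl⟩; exact ⟨rfl, rfl⟩)
        simp [this]
    | cons c' u' =>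
      have h1 : (c :: c' :: u') ++ v = c :: c' :: (u' ++ v) := rfl
      rw [h1, occ2_cons_cons, List.getLast?_cons_cons]
      have h2 : c' :: (u' ++ v) = (c' :: u') ++ v := rfl
      rw [h2, ih, occ2_cons_cons x y c c' u']
      omega

lemma occ2_shift (x k : ℕ) (hk : 1 ≤ k) (w : List ℕ) : occ [x, 0] (shift k w) = 0 := by
  induction w with
  | nil => simp [shift, occ2_nil]
  | cons c w ih =>
    cases w with
    | nil => simp [shift, occ2_single]
    | cons d w' =>
      have : shift k (c :: d :: w') = (c + k) :: (d + k) :: shift k w' := rfl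
      rw [this]
      rw [occ2_cons_cons]
      have hd : shift k (d :: w') = (d + k) :: shift k w' := rfl
      rw [← hd, ih]
      have : ¬ (x = c + k ∧ 0 = d + k) := by rintro ⟨_, h⟩; omega
      simp [this]

/- ### phi and W structure -/

lemma phi_cons (k c : ℕ) (w : List ℕ) : phi k (c :: w) = phiLetter k c ++ phi k w := by
  simp [phi]

lemma phi_nil (k : ℕ) : phi k [] = [] := rfl

lemma phi_append (k : ℕ) (u v : List ℕ) : phi k (u ++ v) = phi k u ++ phi k v := by
  simp [phi]

lemma phi_flatten (k : ℕ) (L : List (List ℕ)) :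
    phi k L.flatten = (L.map (phi k)).flatten := by
  induction L with
  | nil => rfl
  | cons l L ih => simp [phi_append, ih]

lemma phiLetter_shift (k m : ℕ) (hk : 1 ≤ k) :
    phiLetter k (m + k) = (phiLetter k m).map (· + k) := by
  unfold phiLetter
  have h1 : (m + k) % k = m % k := Nat.add_mod_right m k
  have h2 : (m + k) / k = m / k + 1 := by
    rw [Nat.add_div_right _ (by omega)]
  rw [h1, h2]
  by_cases h : m % k = k - 1 <;> simp [h, Nat.mul_add] <;> ring

lemma phi_shift (k : ℕ) (hk : 1 ≤ k) (w : List ℕ) :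
    phi k (shift k w) = shift k (phi k w) := by
  induction w with
  | nil => rfl
  | cons c w ih =>
    have h1 : shift k (c :: w) = (c + k) :: shift k w := rfl
    rw [h1, phi_cons, ih, phi_cons]
    simp [shift, phiLetter_shift k c hk]

lemma W_zero (k : ℕ) : W k 0 = [0] := rfl

lemma W_succ (k n : ℕ) : W k (n + 1) = phi k (W k n) := by
  simp [W, Function.iterate_succ_apply']

lemma phiLetter_ne_nil (k c : ℕ) : phiLetter k c ≠ [] := by
  unfold phiLetter; split <;> simp

lemma W_head (k n : ℕ) (hk : 2 ≤ k) : (W k n).head? = some 0 := by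
  induction n with
  | zero => rfl
  | succ n ih =>
    obtain ⟨t, ht⟩ : ∃ t, W k n = 0 :: t := by
      cases hw : W k n with
      | nil => rw [hw] at ih; simp at ih
      | cons c w =>
        rw [hw] at ih
        simp only [List.head?_cons, Option.some.injEq] at ih
        exact ⟨w, by rw [ih]⟩
    rw [W_succ, ht, phi_cons]
    have h0 : phiLetter k 0 = [0, 1] := by
      unfold phiLetter
      have h1 : 0 % k = 0 := Nat.zero_mod k
      rw [h1]
      have h2 : ¬ ((0:ℕ) = k - 1) := by omega
      simp [h2]
    rw [h0]
    rfl

lemma W_ne_nil (k n : ℕ) (hk : 2 ≤ k) : W k n ≠ [] := by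
  intro h
  have := W_head k n hk
  rw [h] at this
  simp at this

lemma phi_ne_nil (k : ℕ) (w : List ℕ) (hw : w ≠ []) : phi k w ≠ [] := by
  rcases w with _ | ⟨c, w⟩
  · exact absurd rfl hw
  · rw [phi_cons]
    simp [phiLetter_ne_nil]

lemma phiLetter_getLast? (k c : ℕ) : (phiLetter k c).getLast? = some (c + 1) := by
  unfold phiLetter; split <;> rfl

lemma phi_getLast? (k : ℕ) (w : List ℕ) (x : ℕ) (h : w.getLast? = some x) :
    (phi k w).getLast? = some (x + 1) := by
  induction w with
  | nil => simp at h
  | cons c w ih =>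
    cases w with
    | nil =>
      simp only [List.getLast?_singleton, Option.some.injEq] at h
      subst h
      rw [phi_cons, phi_nil, List.append_nil, phiLetter_getLast?]
    | cons c' w' =>
      rw [List.getLast?_cons_cons] at h
      rw [phi_cons, List.getLast?_append, ih h]
      rfl

lemma W_getLast? (k n : ℕ) : (W k n).getLast? = some n := by
  induction n with
  | zero => rfl
  | succ n ih => rw [W_succ]; exact phi_getLast? k _ n ih

/- ### block decomposition -/

def Wtail (k n : ℕ) : List ℕ := if n < k then [n] else shift k (W k (n - k))

lemma W_decomp (k : ℕ) (hk : 2 ≤ k) (n : ℕ) (hn : 1 ≤ n) :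
    W k n = ((List.range (min n (k - 1))).map (fun j => W k (n - 1 - j))).flatten ++ Wtail k n := by
  induction n with
  | zero => omega
  | succ n ih =>
    rcases Nat.eq_or_lt_of_le hn with h1 | h1
    · -- n + 1 = 1
      have hn0 : n = 0 := by omega
      subst hn0
      have hm : min 1 (k - 1) = 1 := by omega
      rw [hm]
      have : W k 1 = [0, 1] := by
        rw [W_succ, W_zero, phi_cons, phi_nil, List.append_nil]
        unfold phiLetter
        have h0 : (0 : ℕ) % k = 0 := Nat.zero_mod k
        rw [h0]
        have : ¬ ((0:ℕ) = k - 1) := by omega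
        simp [this]
      rw [this]
      have ht : Wtail k 1 = [1] := by unfold Wtail; rw [if_pos (by omega)]
      rw [ht]
      rfl
    · -- n ≥ 1
      have hn1 : 1 ≤ n := by omega
      rw [W_succ, ih hn1, phi_append, phi_flatten, List.map_map]
      have hblock : ∀ j ∈ List.range (min n (k-1)),
          (phi k ∘ fun j => W k (n - 1 - j)) j = W k (n - j) := by
        intro j hj
        simp only [List.mem_range] at hj
        have : n - j = (n - 1 - j) + 1 := by omega
        rw [Function.comp_apply, ← W_succ, ← this]
      rw [List.map_congr_left hblock]
      by_cases hcase : n + 1 < k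
      · -- small case: min n (k-1) = n, Wtail k n = [n], phi [n] = [0, n+1]
        have hm : min n (k - 1) = n := by omega
        have hm' : min (n+1) (k - 1) = n + 1 := by omega
        rw [hm, hm']
        have ht : Wtail k n = [n] := by unfold Wtail; rw [if_pos (by omega)]
        have ht' : Wtail k (n+1) = [n+1] := by unfold Wtail; rw [if_pos hcase]
        rw [ht, ht']
        have hphi : phi k [n] = [0, n+1] := by
          rw [phi_cons, phi_nil, List.append_nil]
          unfold phiLetter
          have h1 : n % k = n := Nat.mod_eq_of_lt (by omega)
          rw [h1]
          have h2 : ¬ (n = k - 1) := by omega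
          rw [if_neg h2]
          have h3 : n / k = 0 := Nat.div_eq_of_lt (by omega)
          rw [h3, Nat.mul_zero]
        rw [hphi]
        rw [List.range_succ, List.map_append, List.flatten_append]
        have : (List.map (fun j => W k (n + 1 - 1 - j)) [n]).flatten = [0] := by
          have e : n + 1 - 1 - n = 0 := by omega
          simp [e, W_zero]
        rw [this]
        have hmap : List.map (fun j => W k (n - j)) (List.range n)
            = List.map (fun j => W k (n + 1 - 1 - j)) (List.range n) := by
          apply List.map_congr_left
          intro j hj
          congr 1 <;> omega
        rw [hmap]
        have : phi k [n] = [0] ++ [n+1] := hphi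
        simp [List.append_assoc]
      · by_cases hcase2 : n + 1 = k
        · -- n = k - 1
          have hm : min n (k - 1) = n := by omega
          have hm' : min (n+1) (k - 1) = k - 1 := by omega
          rw [hm, hm']
          have ht : Wtail k n = [n] := by unfold Wtail; rw [if_pos (by omega)]
          have ht' : Wtail k (n+1) = shift k (W k (n + 1 - k)) := by
            unfold Wtail; rw [if_neg (by omega)]
          rw [ht, ht']
          have hphi : phi k [n] = [k] := by
            rw [phi_cons, phi_nil, List.append_nil]
            unfold phiLetter
            have h1 : n % k = n := Nat.mod_eq_of_lt (by omega)
            rw [h1, if_pos (by omega)]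
            congr 1 <;> omega
          rw [hphi]
          have h0 : n + 1 - k = 0 := by omega
          rw [h0, W_zero]
          have : shift k [0] = [k] := by simp [shift]
          rw [this]
          have : n = k - 1 := by omega
          subst this
          congr 1
        · -- n ≥ k
          have hnk : k ≤ n := by omega
          have hm : min n (k - 1) = k - 1 := by omega
          have hm' : min (n+1) (k - 1) = k - 1 := by omega
          rw [hm, hm']
          have ht : Wtail k n = shift k (W k (n - k)) := by
            unfold Wtail; rw [if_neg (by omega)]
          have ht' : Wtail k (n+1) = shift k (W k (n + 1 - k)) := by
            unfold Wtail; rw [if_neg (by omega)]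
          rw [ht, ht', phi_shift k (by omega), ← W_succ]
          have h1 : n - k + 1 = n + 1 - k := by omega
          rw [h1]
          -- now match block lists
          have h2 : List.map (fun j => W k (n - j)) (List.range (k-1))
              = List.map (fun j => W k (n + 1 - 1 - j)) (List.range (k-1)) := by
            apply List.map_congr_left
            intro j hj
            congr 1 <;> omega
          rw [h2]

/- ### counting occurrences of [a,0] -/

lemma flatten_blocks_getLast? (k a n m : ℕ) (hk : 2 ≤ k) (hm : 1 ≤ m) :
    (((List.range m).map (fun j => W k (n - 1 - j))).flatten).getLast?
      = some (n - m) := by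
  obtain ⟨m', rfl⟩ : ∃ m', m = m' + 1 := ⟨m - 1, by omega⟩
  rw [List.range_succ, List.map_append, List.flatten_append]
  rw [List.getLast?_append]
  simp only [List.map_cons, List.map_nil, List.flatten]
  rw [List.append_eq, List.append_nil]
  rw [W_getLast?]
  simp
  omega

lemma occ_blocks (k a n : ℕ) (hk : 2 ≤ k) (ha : 1 ≤ a) :
    ∀ m : ℕ, 1 ≤ m → m ≤ n →
    occ [a, 0] (((List.range m).map (fun j => W k (n - 1 - j))).flatten) =
      (∑ j ∈ Finset.range m, occ [a, 0] (W k (n - 1 - j)))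
        + (if a < n ∧ n - a < m then 1 else 0) := by
  intro m
  induction m with
  | zero => omega
  | succ m ih =>
    intro _ hmn
    rcases Nat.eq_zero_or_pos m with rfl | hm1
    · have hr : List.range 1 = [0] := rfl
      simp only [hr, List.map_cons, List.map_nil, List.flatten_cons,
        List.flatten_nil, List.append_nil, Finset.range_one, Finset.sum_singleton]
      have : ¬ (a < n ∧ n - a < 1) := by omega
      rw [if_neg this, Nat.add_zero, Finset.sum_range_one]
    · rw [List.range_succ, List.map_append, List.flatten_append]
      simp only [List.map_cons, List.map_nil, List.flatten_cons, List.flatten_nil,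
        List.append_nil]
      rw [occ2_append _ _ _ _ (W_ne_nil k _ hk)]
      rw [ih hm1 (by omega)]
      rw [flatten_blocks_getLast? k a n m hk hm1]
      rw [W_head k _ hk]
      rw [Finset.sum_range_succ]
      have hsplit : (if (some (n - m) = some a ∧ (some 0 : Option ℕ) = some 0) then 1 else 0)
          = (if n - m = a then 1 else 0) := by
        by_cases h : n - m = a <;> simp [h]
      rw [hsplit]
      have : (if a < n ∧ n - a < m then 1 else 0) + (if n - m = a then 1 else 0)
          = (if a < n ∧ n - a < m + 1 then 1 else 0) := by
        by_cases h1 : a < n ∧ n - a < m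
        · rw [if_pos h1]
          have h2 : ¬ (n - m = a) := by omega
          rw [if_neg h2, if_pos ⟨h1.1, by omega⟩]
        · rw [if_neg h1]
          by_cases h2 : n - m = a
          · rw [if_pos h2]
            have : a < n ∧ n - a < m + 1 := by omega
            rw [if_pos this]
          · rw [if_neg h2]
            have : ¬ (a < n ∧ n - a < m + 1) := by omega
            rw [if_neg this]
      omega

lemma key_recursion (k a : ℕ) (hk : 2 ≤ k) (ha : 1 ≤ a) (n : ℕ) (hn : 1 ≤ n) :
    occ [a, 0] (W k n) =
      (∑ j ∈ Finset.range (min n (k - 1)), occ [a, 0] (W k (n - 1 - j)))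
        + (if a < n ∧ n - a < min n (k - 1) then 1 else 0) := by
  rw [W_decomp k hk n hn]
  have hm1 : 1 ≤ min n (k - 1) := by omega
  have hmn : min n (k - 1) ≤ n := by omega
  have htail_ne : Wtail k n ≠ [] := by
    unfold Wtail
    split
    · simp
    · intro h
      exact W_ne_nil k (n - k) hk (by simpa [shift] using h)
  rw [occ2_append _ _ _ _ htail_ne]
  rw [occ_blocks k a n hk ha _ hm1 hmn]
  have htail_occ : occ [a, 0] (Wtail k n) = 0 := by
    unfold Wtail
    split
    · exact occ2_single a 0 n
    · exact occ2_shift a k (by omega) _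
  have htail_head : (Wtail k n).head? ≠ some 0 := by
    unfold Wtail
    split
    · simp; omega
    · have := W_head k (n - k) hk
      obtain ⟨t, ht⟩ : ∃ t, W k (n - k) = 0 :: t := by
        cases hw : W k (n - k) with
        | nil => rw [hw] at this; simp at this
        | cons c w =>
          rw [hw] at this; simp only [List.head?_cons, Option.some.injEq] at this
          exact ⟨w, by rw [this]⟩
      rw [ht]
      simp [shift]
      omega
  rw [htail_occ]
  have : (if (((List.range (min n (k-1))).map (fun j => W k (n - 1 - j))).flatten.getLast? = some a
        ∧ (Wtail k n).head? = some 0) then 1 else 0) = 0 := by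
    rw [if_neg]
    rintro ⟨_, h2⟩
    exact htail_head h2
  omega

lemma two_pow_sum (s : ℕ) : ∑ j ∈ Finset.range s, 2 ^ (s - 1 - j) = 2 ^ s - 1 := by
  rw [Finset.sum_range_reflect (fun j => 2 ^ j) s]
  induction s with
  | zero => rfl
  | succ s ih =>
    rw [Finset.sum_range_succ, ih]
    have : 1 ≤ 2 ^ s := Nat.one_le_two_pow
    have : 2 ^ (s + 1) = 2 ^ s + 2 ^ s := by ring
    omega

lemma sum_Icc_shift (r : ℕ) (f : ℕ → ℕ) :
    ∑ j ∈ Finset.Icc 1 r, f j = ∑ j ∈ Finset.range r, f (j + 1) := by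
  induction r with
  | zero => simp
  | succ r ih =>
    rw [Finset.sum_Icc_succ_top (by omega), ih, Finset.sum_range_succ]

theorem stmt14' (k a : ℕ) (hk : 2 ≤ k) (ha : 1 ≤ a) (n : ℕ) :
    (n ≤ a → occ [a, 0] (W k n) = 0) ∧
    (a < n → n < a + k - 1 → occ [a, 0] (W k n) = 2 ^ (n - a - 1)) ∧
    (a + k - 1 ≤ n →
      occ [a, 0] (W k n) = ∑ j ∈ Finset.Icc 1 (k - 1), occ [a, 0] (W k (n - j))) := by
  induction n using Nat.strong_induction_on with
  | _ n ih =>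
    refine ⟨?_, ?_, ?_⟩
    · -- n ≤ a
      intro hna
      rcases Nat.eq_zero_or_pos n with rfl | hn1
      · rw [W_zero]; exact occ2_single a 0 0
      · rw [key_recursion k a hk ha n hn1]
        have h1 : ¬ (a < n ∧ n - a < min n (k - 1)) := by omega
        rw [if_neg h1, Nat.add_zero]
        apply Finset.sum_eq_zero
        intro j hj
        exact (ih (n - 1 - j) (by omega)).1 (by omega)
    · -- a < n < a + k - 1
      intro h1 h2
      have hn1 : 1 ≤ n := by omega
      rw [key_recursion k a hk ha n hn1]
      set m := min n (k - 1) with hm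
      set s := n - 1 - a with hs
      have hsm : s ≤ m := by omega
      have hδ : a < n ∧ n - a < m := by
        constructor
        · exact h1
        · omega
      rw [if_pos hδ]
      have hsum : ∑ j ∈ Finset.range m, occ [a, 0] (W k (n - 1 - j))
          = ∑ j ∈ Finset.range m, (if j < s then 2 ^ (s - 1 - j) else 0) := by
        apply Finset.sum_congr rfl
        intro j hj
        simp only [Finset.mem_range] at hj
        by_cases hjs : j < s
        · rw [if_pos hjs]
          have := (ih (n - 1 - j) (by omega)).2.1 (by omega) (by omega)
          rw [this]
          congr 1
          omega
        · rw [if_neg hjs]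
          exact (ih (n - 1 - j) (by omega)).1 (by omega)
      rw [hsum]
      have hsum2 : ∑ j ∈ Finset.range m, (if j < s then 2 ^ (s - 1 - j) else 0)
          = ∑ j ∈ Finset.range s, (if j < s then 2 ^ (s - 1 - j) else 0) := by
        symm
        apply Finset.sum_subset
        · apply Finset.range_subset_range.mpr hsm
        · intro x _ hx
          simp only [Finset.mem_range] at hx
          rw [if_neg hx]
      rw [hsum2]
      have hsum3 : ∑ j ∈ Finset.range s, (if j < s then 2 ^ (s - 1 - j) else 0)
          = ∑ j ∈ Finset.range s, 2 ^ (s - 1 - j) := by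
        apply Finset.sum_congr rfl
        intro j hj
        simp only [Finset.mem_range] at hj
        rw [if_pos hj]
      rw [hsum3, two_pow_sum]
      have hpos : 1 ≤ 2 ^ s := Nat.one_le_two_pow
      have : n - a - 1 = s := by omega
      rw [this]
      omega
    · -- n ≥ a + k - 1
      intro h3
      have hn1 : 1 ≤ n := by omega
      rw [key_recursion k a hk ha n hn1]
      have hm : min n (k - 1) = k - 1 := by omega
      rw [hm]
      have hδ : ¬ (a < n ∧ n - a < k - 1) := by omega
      rw [if_neg hδ, Nat.add_zero]
      rw [sum_Icc_shift]
      apply Finset.sum_congr rfl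
      intro j hj
      simp only [Finset.mem_range] at hj
      have : n - 1 - j = n - (j + 1) := by omega
      rw [this]

theorem stmt14 (k a : ℕ) (hk : 2 ≤ k) (ha : 1 ≤ a) (n : ℕ) :
    (n ≤ a → occ [a, 0] (W k n) = 0) ∧
    (a < n → n < a + k - 1 → occ [a, 0] (W k n) = 2 ^ (n - a - 1)) ∧
    (a + k - 1 ≤ n →
      occ [a, 0] (W k n) = ∑ j ∈ Finset.Icc 1 (k - 1), occ [a, 0] (W k (n - j))) := stmt14' k a hk ha n
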